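/- arXiv:1609.04293 — 10 statements merged into one kernel-verified Lean document; each statement's English description precedes it below -/
import Mathlib

section
/- Let X be a chain-complete partially ordered set, ι and κ finite types, s : (ι → X) → (κ → X) monotone with respect to the pointwise orders, and fix i : ι and o : κ. Let φ : (ι → X) → X be such that for every 𝐱 : ι → X, φ 𝐱 is the least element of {y : X | s (Function.update 𝐱 i y) o = y}. Then the interface-connected system g : (ι → X) → (κ → X) defined by g 𝐱 = s (Function.update 𝐱 i (φ 𝐱)) is monotone (hence the class of monotone systems is closed under connecting an input interface i to an output interface o via least fixed points). -/
/-- In a chain-complete poset, connecting an input interface `i` to an output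
interface `o` of a monotone system `s` via least fixed points yields a
monotone system `xs ↦ s (Function.update xs i (φ xs))`. -/
theorem stmt_4 {X : Type*} [PartialOrder X]
    (hcpo : ∀ C : Set X, IsChain (· ≤ ·) C → ∃ u, IsLUB C u)
    {ι κ : Type*} [Fintype ι] [Fintype κ] [DecidableEq ι]
    (s : (ι → X) → (κ → X)) (hs : Monotone s)
    (i : ι) (o : κ) (φ : (ι → X) → X)
    (hφ : ∀ xs : ι → X, IsLeast {y : X | s (Function.update xs i y) o = y} (φ xs)) :
    Monotone (fun xs : ι → X => s (Function.update xs i (φ xs))) := by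
  -- least element ⊥
  obtain ⟨bot, hbot⟩ := hcpo ∅ (by simp [IsChain])
  have hbot_le : ∀ y, bot ≤ y := fun y => hbot.2 (by simp [upperBounds])
  have key : ∀ xs ys : ι → X, xs ≤ ys → φ xs ≤ φ ys := by
    intro xs ys hxy
    set f : X → X := fun y => s (Function.update xs i y) o with hf
    have hfmono : Monotone f := by
      intro a b hab
      exact hs (fun j => by
        by_cases hj : j = i
        · subst hj; simp [hab]
        · simp [Function.update_of_ne hj]) o
    have hpre : f (φ ys) ≤ φ ys := by
      have h1 : f (φ ys) ≤ s (Function.update ys i (φ ys)) o := by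
        refine hs (fun j => ?_) o
        by_cases hj : j = i
        · subst hj; simp
        · simp [Function.update_of_ne hj, hxy j]
      calc f (φ ys) ≤ s (Function.update ys i (φ ys)) o := h1
        _ = φ ys := (hφ ys).1
    -- Zorn on M = {y | y ≤ f y ∧ y ≤ φ ys}
    set M : Set X := {y | y ≤ f y ∧ y ≤ φ ys} with hM
    obtain ⟨m, hm⟩ := zorn_le₀ M (by
      intro c hcM hc
      obtain ⟨u, hu⟩ := hcpo c hc
      refine ⟨u, ⟨?_, ?_⟩, fun z hz => hu.1 hz⟩
      · refine hu.2 (fun z hz => ?_)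
        exact le_trans (hcM hz).1 (hfmono (hu.1 hz))
      · exact hu.2 (fun z hz => (hcM hz).2))
    have hmM : m ∈ M := hm.1
    have hfmM : f m ∈ M := ⟨hfmono hmM.1, le_trans (hfmono hmM.2) hpre⟩
    have hfix : f m = m := le_antisymm (hm.2 hfmM hmM.1) hmM.1
    have : φ xs ≤ m := (hφ xs).2 hfix
    exact this.trans hmM.2
  intro xs ys hxy
  refine hs (fun j => ?_) 
  by_cases hj : j = i
  · subst hj; simp [key xs ys hxy]
  · simp [Function.update_of_ne hj, hxy j]
end

section
/- Let X be an ω-complete partial order with a least element, ι and κ finite types, and let s : (ι → X) → (κ → X) be ω-continuous (for every monotone sequence c : ℕ → (ι → X), s (ωSup c) is the least upper bound of {s (c n) | n ∈ ℕ}). Fix i : ι and o : κ, and let φ : (ι → X) → X be such that for every 𝐱, φ 𝐱 is the least element of {y : X | s (Function.update 𝐱 i y) o = y}. Then φ is ω-continuous: for every monotone sequence c : ℕ → (ι → X), φ (ωSup c) is the least upper bound of {φ (c n) | n ∈ ℕ}. -/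
/-!
Write `F (x, y) = s (update x i y) o`, an ω-continuous map on `(ι → X) × X`. By Kleene's
construction `φ x` lies below every prefixed point of `F (x, ·)`, which makes `φ` monotone.
For a chain `c`, joint continuity of `F` turns the chain of fixed points `(c n, φ (c n))` into
the fixed point `(ωSup c, ⨆ n, φ (c n))`, so `φ (ωSup c)` lies below `⨆ n, φ (c n)`.
-/

open OmegaCompletePartialOrder

namespace OmegaCompletePartialOrder

variable {α β : Type*} [OmegaCompletePartialOrder α] [OmegaCompletePartialOrder β]

theorem ωScottContinuous_iff_isLUB {f : α → β} :
    ωScottContinuous f ↔ ∀ c : Chain α, IsLUB (Set.range fun n => f (c n)) (f (ωSup c)) := by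
  refine ⟨fun hf c => hf.isLUB, fun hf => ?_⟩
  rintro _ ⟨c, rfl⟩ - - a ha
  rw [ha.unique (isLUB_range_ωSup c), ← Set.range_comp]
  exact hf c

theorem ωScottContinuous_update {ι : Type*} [DecidableEq ι] {γ : ι → Type*}
    [∀ j, OmegaCompletePartialOrder (γ j)] (i : ι) :
    ωScottContinuous fun p : (∀ j, γ j) × γ i => Function.update p.1 i p.2 := by
  refine ωScottContinuous.of_apply₂ fun j => ?_
  by_cases h : j = i
  · subst h
    simpa only [Function.update_self] using Prod.ωScottContinuous_snd
  · simp only [Function.update_of_ne h]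
    exact (ωScottContinuous.apply j).comp Prod.ωScottContinuous_fst

-- Kleene: the least fixed point is the supremum of the iterates of `⊥`, which stay below `a`.
theorem IsLeast.le_of_map_le [OrderBot α] {g : α → α} (hg : ωScottContinuous g) {y : α}
    (hy : IsLeast {x | g x = x} y) {a : α} (ha : g a ≤ a) : y ≤ a :=
  let f := ContinuousHom.ofFun g hg
  (hy.2 (fixedPoints.ωSup_iterate_mem_fixedPoint f ⊥ bot_le)).trans
    (fixedPoints.ωSup_iterate_le_prefixedPoint f ⊥ bot_le ha bot_le)

variable [OrderBot β] {F : α × β → β} {φ : α → β}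

theorem monotone_of_isLeast_fixedPoints (hF : ωScottContinuous F)
    (hφ : ∀ a, IsLeast {y | F (a, y) = y} (φ a)) : Monotone φ := by
  intro a b hab
  have hFa : ωScottContinuous fun y => F (a, y) := by fun_prop
  refine (hφ a).le_of_map_le hFa ?_
  calc F (a, φ b) ≤ F (b, φ b) := hF.monotone ⟨hab, le_rfl⟩
    _ = φ b := (hφ b).1

theorem ωScottContinuous_of_isLeast_fixedPoints (hF : ωScottContinuous F)
    (hφ : ∀ a, IsLeast {y | F (a, y) = y} (φ a)) : ωScottContinuous φ := by
  have hmono := monotone_of_isLeast_fixedPoints hF hφ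
  refine .of_monotone_map_ωSup ⟨hmono, fun c => le_antisymm ?_ ?_⟩
  · let d := c.map ⟨φ, hmono⟩
    have hfix : F (ωSup c, ωSup d) = ωSup d := by
      rw [← Prod.ωSup_zip, hF.map_ωSup]
      exact congrArg ωSup (Chain.ext (funext fun n => (hφ (c n)).1))
    exact (hφ (ωSup c)).2 hfix
  · exact ωSup_le _ _ fun n => hmono (le_ωSup c n)

end OmegaCompletePartialOrder

theorem stmt_6_general {X : Type*} [OmegaCompletePartialOrder X] [OrderBot X]
    {ι κ : Type*} [DecidableEq ι]
    (s : (ι → X) → (κ → X))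
    (hs : ∀ c : Chain (ι → X),
      IsLUB (Set.range fun n => s (c n)) (s (ωSup c)))
    (i : ι) (o : κ) (φ : (ι → X) → X)
    (hφ : ∀ xs : ι → X, IsLeast {y : X | s (Function.update xs i y) o = y} (φ xs)) :
    ∀ c : Chain (ι → X),
      IsLUB (Set.range fun n => φ (c n)) (φ (ωSup c)) := by
  have hF : ωScottContinuous fun p : (ι → X) × X => s (Function.update p.1 i p.2) o :=
    (ωScottContinuous.apply o).comp
      ((ωScottContinuous_iff_isLUB.mpr hs).comp (ωScottContinuous_update i))
  exact ωScottContinuous_iff_isLUB.mp (ωScottContinuous_of_isLeast_fixedPoints hF hφ)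

/-- For an ω-continuous system `s` over an ω-CPO with least element, the map
`φ` sending each input tuple to the least fixed point arising from connecting
input interface `i` to output interface `o` is itself ω-continuous. -/
theorem stmt_6 {X : Type*} [OmegaCompletePartialOrder X] [OrderBot X]
    {ι κ : Type*} [Fintype ι] [Fintype κ] [DecidableEq ι]
    (s : (ι → X) → (κ → X))
    (hs : ∀ c : Chain (ι → X),
      IsLUB (Set.range fun n => s (c n)) (s (ωSup c)))
    (i : ι) (o : κ) (φ : (ι → X) → X)
    (hφ : ∀ xs : ι → X, IsLeast {y : X | s (Function.update xs i y) o = y} (φ xs)) :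
    ∀ c : Chain (ι → X),
      IsLUB (Set.range fun n => φ (c n)) (φ (ωSup c)) :=
  stmt_6_general s hs i o φ hφ
end

section
/- Let X be an ω-complete partial order with a least element, ι and κ finite types, and let s : (ι → X) → (κ → X) be ω-continuous (for every monotone sequence c : ℕ → (ι → X), s (ωSup c) is the least upper bound of {s (c n) | n ∈ ℕ}). Fix i : ι and o : κ, and let φ : (ι → X) → X be such that for every 𝐱, φ 𝐱 is the least element of {y : X | s (Function.update 𝐱 i y) o = y}. Then the interface-connected system g : (ι → X) → (κ → X) defined by g 𝐱 = s (Function.update 𝐱 i (φ 𝐱)) is ω-continuous: for every monotone sequence c : ℕ → (ι → X), g (ωSup c) is the least upper bound of {g (c n) | n ∈ ℕ} in the pointwise order (hence the class of ω-continuous systems is closed under interface connection via least fixed points). -/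
open OmegaCompletePartialOrder

private lemma aux_isLUB_range_ωSup {α : Type*} [OmegaCompletePartialOrder α]
    (c : Chain α) : IsLUB (Set.range fun n => c n) (ωSup c) :=
  ⟨by rintro _ ⟨n, rfl⟩; exact le_ωSup c n,
   fun u hu => ωSup_le c u fun n => hu ⟨n, rfl⟩⟩

/-- For an ω-continuous system `s` over an ω-CPO with least element, the
interface-connected system `g : xs ↦ s (Function.update xs i (φ xs))`, where
`φ xs` is the least fixed point of `y ↦ s (Function.update xs i y) o`, is
again ω-continuous. -/
theorem stmt_7 {X : Type*} [OmegaCompletePartialOrder X] [OrderBot X]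
    {ι κ : Type*} [Fintype ι] [Fintype κ] [DecidableEq ι]
    (s : (ι → X) → (κ → X))
    (hs : ∀ c : Chain (ι → X),
      IsLUB (Set.range fun n => s (c n)) (s (ωSup c)))
    (i : ι) (o : κ) (φ : (ι → X) → X)
    (hφ : ∀ xs : ι → X, IsLeast {y : X | s (Function.update xs i y) o = y} (φ xs))
    (g : (ι → X) → (κ → X))
    (hg : ∀ xs : ι → X, g xs = s (Function.update xs i (φ xs))) :
    ∀ c : Chain (ι → X),
      IsLUB (Set.range fun n => g (c n)) (g (ωSup c)) := by
  classical
  -- s is monotone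
  have hsmono : Monotone s := by
    intro x y hxy
    have hc : Monotone (fun n : ℕ => if n = 0 then x else y) := by
      intro a b hab
      by_cases ha : a = 0 <;> by_cases hb : b = 0 <;> simp [ha, hb]
      · exact hxy
      · omega
    set c : Chain (ι → X) := ⟨fun n => if n = 0 then x else y, hc⟩ with hcdef
    have hy : IsLUB (Set.range fun n => c n) y := by
      constructor
      · rintro _ ⟨n, rfl⟩
        show (if n = 0 then x else y) ≤ y
        by_cases hn : n = 0 <;> simp [hn]
        exact hxy
      · intro u hu
        have h1 : (fun n => c n) 1 = y := by
          show (if 1 = 0 then x else y) = y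
          simp
        exact h1 ▸ hu ⟨1, rfl⟩
    have hωc : ωSup c = y := (aux_isLUB_range_ωSup c).unique hy
    have hx : s (c 0) ≤ s (ωSup c) := (hs c).1 ⟨0, rfl⟩
    have hc0 : c 0 = x := by
      show (if 0 = 0 then x else y) = x
      simp
    rw [hc0, hωc] at hx
    exact hx
  -- updates are monotone
  have hupd_le : ∀ {x y : ι → X} {u v : X}, x ≤ y → u ≤ v →
      Function.update x i u ≤ Function.update y i v := by
    intro x y u v hxy huv j
    by_cases hj : j = i
    · subst hj; simpa using huv
    · simpa [Function.update_of_ne hj] using hxy j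
  -- ωSup of an update chain
  have hupdate : ∀ (a : Chain (ι → X)) (e : Chain X),
      IsLUB (Set.range fun n => Function.update (a n) i (e n))
        (Function.update (ωSup a) i (ωSup e)) := by
    intro a e
    constructor
    · rintro _ ⟨n, rfl⟩
      exact hupd_le (le_ωSup a n) (le_ωSup e n)
    · intro v hv
      have hv' : ∀ n, Function.update (a n) i (e n) ≤ v := fun n => hv ⟨n, rfl⟩
      have ha : ωSup a ≤ Function.update v i ((ωSup a) i) := by
        apply ωSup_le
        intro n
        intro j
        by_cases hj : j = i
        · subst hj; simpa using (le_ωSup a n) j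
        · have := hv' n j
          simpa [Function.update_of_ne hj] using this
      have he : ωSup e ≤ v i := by
        apply ωSup_le
        intro n
        have := hv' n i
        simpa using this
      intro j
      by_cases hj : j = i
      · subst hj; simpa using he
      · have := ha j
        simpa [Function.update_of_ne hj] using this
  -- coordinatewise continuity of s
  have hcoord : ∀ (d : Chain (ι → X)) (p : κ),
      IsLUB (Set.range fun n => s (d n) p) (s (ωSup d) p) := by
    intro d p
    constructor
    · rintro _ ⟨n, rfl⟩
      exact hsmono (le_ωSup d n) p
    · intro u hu
      have hle : s (ωSup d) ≤ Function.update (s (ωSup d)) p u := by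
        apply (hs d).2
        rintro _ ⟨n, rfl⟩
        intro q
        by_cases hq : q = p
        · subst hq; simpa using hu ⟨n, rfl⟩
        · simpa [Function.update_of_ne hq] using hsmono (le_ωSup d n) q
      simpa using hle p
  -- ωSup of a constant chain
  have hconst : ∀ x : ι → X,
      ωSup (⟨fun _ => x, monotone_const⟩ : Chain (ι → X)) = x := by
    intro x
    refine (aux_isLUB_range_ωSup _).unique ⟨?_, fun u hu => hu ⟨0, rfl⟩⟩
    rintro _ ⟨n, rfl⟩
    exact le_rfl
  -- φ is monotone via Kleene iterates
  have hφmono : ∀ {x y : ι → X}, x ≤ y → φ x ≤ φ y := by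
    intro x y hxy
    set F : X → X := fun z => s (Function.update x i z) o with hFdef
    have hemono : Monotone (fun n : ℕ => F^[n] ⊥) := by
      apply monotone_nat_of_le_succ
      intro n
      induction n with
      | zero => exact bot_le
      | succ n ih =>
        rw [Function.iterate_succ_apply', Function.iterate_succ_apply']
        exact hsmono (hupd_le le_rfl ih) o
    set e : Chain X := ⟨fun n => F^[n] ⊥, hemono⟩ with hedef
    have hecoe : ∀ n, e n = F^[n] ⊥ := fun n => rfl
    set K := ωSup e with hKdef
    have hdmono : Monotone (fun n => Function.update x i (e n)) := by
      intro a b hab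
      exact hupd_le le_rfl (e.monotone hab)
    set d : Chain (ι → X) := ⟨fun n => Function.update x i (e n), hdmono⟩ with hddef
    have hdcoe : ∀ n, d n = Function.update x i (e n) := fun n => rfl
    have hsd : ∀ n, s (d n) o = e (n + 1) := by
      intro n
      rw [hdcoe, hecoe, hecoe, Function.iterate_succ_apply']
    have hωd : ωSup d = Function.update x i K := by
      have h := hupdate ⟨fun _ => x, monotone_const⟩ e
      rw [hconst x] at h
      exact (aux_isLUB_range_ωSup d).unique h
    have hK : s (Function.update x i K) o = K := by
      have h1 := hcoord d o
      have h2 : IsLUB (Set.range fun n => s (d n) o) K := by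
        constructor
        · rintro _ ⟨n, rfl⟩
          show s (d n) o ≤ K
          rw [hsd]
          exact le_ωSup e (n + 1)
        · intro u hu
          apply ωSup_le
          intro n
          have h3 : e n ≤ e (n + 1) := e.monotone (Nat.le_succ n)
          have h4 : s (d n) o ≤ u := hu ⟨n, rfl⟩
          rw [hsd] at h4
          exact le_trans h3 h4
      rw [← hωd]
      exact h1.unique h2
    have h5 : φ x ≤ K := (hφ x).2 hK
    have h6 : K ≤ φ y := by
      apply ωSup_le
      intro n
      show F^[n] ⊥ ≤ φ y
      induction n with
      | zero => exact bot_le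
      | succ n ih =>
        rw [Function.iterate_succ_apply']
        calc s (Function.update x i (F^[n] ⊥)) o
            ≤ s (Function.update y i (φ y)) o := hsmono (hupd_le hxy ih) o
          _ = φ y := (hφ y).1
    exact le_trans h5 h6
  -- main argument
  intro c
  set e : Chain X := ⟨fun n => φ (c n), fun a b hab => hφmono (c.monotone hab)⟩ with hedef
  set L := ωSup e with hLdef
  have hdmono : Monotone (fun n => Function.update (c n) i (e n)) := by
    intro a b hab
    exact hupd_le (c.monotone hab) (e.monotone hab)
  set d : Chain (ι → X) := ⟨fun n => Function.update (c n) i (e n), hdmono⟩ with hddef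
  have hωd : ωSup d = Function.update (ωSup c) i L := (aux_isLUB_range_ωSup d).unique (hupdate c e)
  have hLfix : s (Function.update (ωSup c) i L) o = L := by
    have h1 := hcoord d o
    have h2 : IsLUB (Set.range fun n => s (d n) o) L := by
      have heq : (fun n => s (d n) o) = fun n => e n :=
        funext fun n => (hφ (c n)).1
      rw [heq]
      exact aux_isLUB_range_ωSup e
    rw [← hωd]
    exact h1.unique h2
  have hφω : φ (ωSup c) = L := by
    apply le_antisymm ((hφ (ωSup c)).2 hLfix)
    apply ωSup_le
    intro n
    exact hφmono (le_ωSup c n)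
  have hgc : (fun n => g (c n)) = fun n => s (d n) :=
    funext fun n => hg (c n)
  rw [hgc, hg]
  have hfin : Function.update (ωSup c) i (φ (ωSup c)) = ωSup d := by
    rw [hφω, hωd]
  rw [hfin]
  exact hs d
end

section
/- Let X be a partially ordered set in which every nonempty chain has a greatest lower bound (infimum). Let f : X → X be monotone and let x ∈ X satisfy f x ≤ x. Then there exists x̂ ∈ X with f x̂ = x̂ and x̂ ≤ x. -/
/-- In a poset in which every nonempty chain has an infimum, a monotone
function `f` with a point `x` satisfying `f x ≤ x` has a fixed point below
`x`. -/
theorem stmt_8 {X : Type*} [PartialOrder X]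
    (hinf : ∀ C : Set X, C.Nonempty → IsChain (· ≤ ·) C → ∃ g, IsGLB C g)
    (f : X → X) (hf : Monotone f) (x : X) (hx : f x ≤ x) :
    ∃ y : X, f y = y ∧ y ≤ x := by
  set S : Set X := {y | f y ≤ y ∧ y ≤ x} with hS
  have hxS : x ∈ S := ⟨hx, le_refl x⟩
  have key : ∀ c ⊆ S, IsChain (· ≥ ·) c → ∀ y ∈ c, ∃ lb ∈ S, ∀ z ∈ c, lb ≤ z := by
    intro c hcS hc y hy
    obtain ⟨g, hg⟩ := hinf c ⟨y, hy⟩ hc.symm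
    refine ⟨g, ⟨?_, ?_⟩, fun z hz => hg.1 hz⟩
    · exact hg.2 (fun z hz => le_trans (hf (hg.1 hz)) (hcS hz).1)
    · exact le_trans (hg.1 hy) (hcS hy).2
  obtain ⟨m, -, hmS, hmin⟩ :=
    zorn_le_nonempty₀ (α := Xᵒᵈ) S
      (fun c hcS hc z hz => key c hcS hc z hz) x hxS
  have hfm : f m ∈ S := ⟨hf hmS.1, le_trans hmS.1 hmS.2⟩
  exact ⟨m, le_antisymm hmS.1 (hmin hfm hmS.1), hmS.2⟩
end

section
/- Let X be a partially ordered set in which every chain has a least upper bound and every nonempty chain has a greatest lower bound. Let f : X × X → X × X be monotone with respect to the product order, and suppose (x̂₀, x̂₁) is the least fixed point of f. Then x̂₀ is the least fixed point of the map a ↦ (f (a, x̂₁)).1, and x̂₁ is the least fixed point of the map b ↦ (f (x̂₀, b)).2. -/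
/-- In a poset where every chain has a LUB, a monotone map has a fixed point in any
set `K` that is closed under the map and under LUBs of chains. -/
lemma aux_exists_fixed {α : Type*} [PartialOrder α]
    (hsup : ∀ C : Set α, IsChain (· ≤ ·) C → ∃ u, IsLUB C u)
    (h : α → α) (hh : Monotone h) (K : Set α)
    (hK : ∀ u ∈ K, h u ∈ K)
    (hKlub : ∀ C ⊆ K, IsChain (· ≤ ·) C → ∀ u, IsLUB C u → u ∈ K) :
    ∃ m ∈ K, h m = m := by
  have hzorn : ∀ c ⊆ {u | u ∈ K ∧ u ≤ h u}, IsChain (· ≤ ·) c →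
      ∃ ub ∈ {u | u ∈ K ∧ u ≤ h u}, ∀ z ∈ c, z ≤ ub := by
    intro c hc hchain
    obtain ⟨u, hu⟩ := hsup c hchain
    have hcK : c ⊆ K := fun z hz => (hc hz).1
    have huK : u ∈ K := hKlub c hcK hchain u hu
    have huh : u ≤ h u := by
      apply hu.2
      intro z hz
      exact le_trans (hc hz).2 (hh (hu.1 hz))
    exact ⟨u, ⟨huK, huh⟩, fun z hz => hu.1 hz⟩
  obtain ⟨m, hm⟩ := zorn_le₀ {u | u ∈ K ∧ u ≤ h u} hzorn
  obtain ⟨⟨hmK, hmle⟩, hmax⟩ := hm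
  refine ⟨m, hmK, le_antisymm ?_ hmle⟩
  exact hmax ⟨hK m hmK, hh hmle⟩ hmle

/-- Chains in a product poset have LUBs if chains in the base do. -/
lemma aux_prod_sup {X : Type*} [PartialOrder X]
    (hsup : ∀ C : Set X, IsChain (· ≤ ·) C → ∃ u, IsLUB C u) :
    ∀ C : Set (X × X), IsChain (· ≤ ·) C → ∃ u, IsLUB C u := by
  intro C hC
  have h1 : IsChain (· ≤ ·) (Prod.fst '' C) := by
    rintro _ ⟨p, hp, rfl⟩ _ ⟨q, hq, rfl⟩ hne
    rcases eq_or_ne p q with rfl | hpq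
    · exact absurd rfl hne
    · rcases hC hp hq hpq with h | h
      · exact Or.inl h.1
      · exact Or.inr h.1
  have h2 : IsChain (· ≤ ·) (Prod.snd '' C) := by
    rintro _ ⟨p, hp, rfl⟩ _ ⟨q, hq, rfl⟩ hne
    rcases eq_or_ne p q with rfl | hpq
    · exact absurd rfl hne
    · rcases hC hp hq hpq with h | h
      · exact Or.inl h.2
      · exact Or.inr h.2
  obtain ⟨u0, hu0⟩ := hsup _ h1
  obtain ⟨u1, hu1⟩ := hsup _ h2
  refine ⟨(u0, u1), ⟨?_, ?_⟩⟩
  · intro p hp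
    exact ⟨hu0.1 ⟨p, hp, rfl⟩, hu1.1 ⟨p, hp, rfl⟩⟩
  · intro w hw
    constructor
    · apply hu0.2
      rintro _ ⟨p, hp, rfl⟩
      exact (hw hp).1
    · apply hu1.2
      rintro _ ⟨p, hp, rfl⟩
      exact (hw hp).2

/-- If `(x0, x1)` is the least fixed point of a monotone function
`f : X × X → X × X` on a poset where every chain has a supremum and every
nonempty chain has an infimum, then `x0` is the least fixed point of
`a ↦ (f (a, x1)).1` and `x1` is the least fixed point of `b ↦ (f (x0, b)).2`. -/
theorem stmt_9 {X : Type*} [PartialOrder X]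
    (hsup : ∀ C : Set X, IsChain (· ≤ ·) C → ∃ u, IsLUB C u)
    (hinf : ∀ C : Set X, C.Nonempty → IsChain (· ≤ ·) C → ∃ g, IsGLB C g)
    (f : X × X → X × X) (hf : Monotone f)
    (x0 x1 : X) (hlfp : IsLeast {p : X × X | f p = p} (x0, x1)) :
    IsLeast {a : X | (f (a, x1)).1 = a} x0 ∧
      IsLeast {b : X | (f (x0, b)).2 = b} x1 := by
  have hfix : f (x0, x1) = (x0, x1) := hlfp.1
  -- least fixed point is below every pre-fixed point
  have hpre : ∀ p : X × X, f p ≤ p → (x0, x1) ≤ p := by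
    intro p hp
    obtain ⟨m, hmK, hm⟩ := aux_exists_fixed (aux_prod_sup hsup) f hf {q | q ≤ p}
      (fun u hu => le_trans (hf hu) hp)
      (fun C hC _ u hu => hu.2 fun z hz => hC hz)
    exact le_trans (hlfp.2 hm) hmK
  constructor
  · constructor
    · show (f (x0, x1)).1 = x0
      rw [hfix]
    · intro a ha
      have hg : Monotone fun u => (f (u, x1)).1 :=
        fun u v huv => (hf (Prod.mk_le_mk.2 ⟨huv, le_rfl⟩)).1
      obtain ⟨m, ⟨hm0, hma⟩, hm⟩ := aux_exists_fixed hsup _ hg {u | u ≤ x0 ∧ u ≤ a}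
        (fun u hu => ⟨by
            calc (f (u, x1)).1 ≤ (f (x0, x1)).1 := (hf (Prod.mk_le_mk.2 ⟨hu.1, le_rfl⟩)).1
            _ = x0 := by rw [hfix],
          by
            calc (f (u, x1)).1 ≤ (f (a, x1)).1 := (hf (Prod.mk_le_mk.2 ⟨hu.2, le_rfl⟩)).1
            _ = a := ha⟩)
        (fun C hC _ u hu =>
          ⟨hu.2 fun z hz => (hC hz).1, hu.2 fun z hz => (hC hz).2⟩)
      have hpre' : f (m, x1) ≤ (m, x1) := by
        constructor
        · exact le_of_eq hm
        · calc (f (m, x1)).2 ≤ (f (x0, x1)).2 := (hf (Prod.mk_le_mk.2 ⟨hm0, le_rfl⟩)).2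
          _ = x1 := by rw [hfix]
      exact le_trans (hpre _ hpre').1 hma
  · constructor
    · show (f (x0, x1)).2 = x1
      rw [hfix]
    · intro b hb
      have hg : Monotone fun v => (f (x0, v)).2 :=
        fun u v huv => (hf (Prod.mk_le_mk.2 ⟨le_rfl, huv⟩)).2
      obtain ⟨m, ⟨hm1, hmb⟩, hm⟩ := aux_exists_fixed hsup _ hg {v | v ≤ x1 ∧ v ≤ b}
        (fun u hu => ⟨by
            calc (f (x0, u)).2 ≤ (f (x0, x1)).2 := (hf (Prod.mk_le_mk.2 ⟨le_rfl, hu.1⟩)).2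
            _ = x1 := by rw [hfix],
          by
            calc (f (x0, u)).2 ≤ (f (x0, b)).2 := (hf (Prod.mk_le_mk.2 ⟨le_rfl, hu.2⟩)).2
            _ = b := hb⟩)
        (fun C hC _ u hu =>
          ⟨hu.2 fun z hz => (hC hz).1, hu.2 fun z hz => (hC hz).2⟩)
      have hpre' : f (x0, m) ≤ (x0, m) := by
        constructor
        · calc (f (x0, m)).1 ≤ (f (x0, x1)).1 := (hf (Prod.mk_le_mk.2 ⟨le_rfl, hm1⟩)).1
          _ = x0 := by rw [hfix]
        · exact le_of_eq hm
      exact le_trans (hpre _ hpre').2 hmb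
end

section
/- Let X be a partially ordered set in which every chain has a least upper bound and every nonempty chain has a greatest lower bound, and let f : X × X → X × X be monotone with respect to the product order. Let φ : X → X be such that for every b, φ b is the least element of {a | (f (a, b)).1 = a}, and suppose b* is the least element of {b | (f (φ b, b)).2 = b}. Then (φ b*, b*) is the least fixed point of f. Consequently, resolving the two feedback connections by least fixed points in either order yields the same pair, namely the least fixed point of f (composition-order invariance of the system algebras of monotone and continuous systems). -/
/-- In a chain-complete poset, a least fixed point of a monotone map is below
every prefixed point. -/
private lemma lfp_le_prefixed {X : Type*} [PartialOrder X]
    (hsup : ∀ C : Set X, IsChain (· ≤ ·) C → ∃ u, IsLUB C u)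
    (h : X → X) (hh : Monotone h) (z : X) (hz : IsLeast {w : X | h w = w} z)
    (x : X) (hx : h x ≤ x) : z ≤ x := by
  set P : Set X := {y | y ≤ h y ∧ y ≤ x} with hP
  obtain ⟨m, hm⟩ := zorn_le₀ P (fun c hcP hc => by
    obtain ⟨u, hu⟩ := hsup c hc
    have hux : u ≤ x := hu.2 fun y hy => (hcP hy).2
    have huh : u ≤ h u := hu.2 fun y hy =>
      le_trans (hcP hy).1 (hh (hu.1 hy))
    exact ⟨u, ⟨huh, hux⟩, fun y hy => hu.1 hy⟩)
  have hmP : m ∈ P := hm.1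
  have hhmP : h m ∈ P := ⟨hh hmP.1, le_trans (hh hmP.2) hx⟩
  have : h m = m := le_antisymm (hm.2 hhmP hmP.1) hmP.1
  exact le_trans (hz.2 this) hmP.2

private lemma main_least {X : Type*} [PartialOrder X]
    (hsup : ∀ C : Set X, IsChain (· ≤ ·) C → ∃ u, IsLUB C u)
    (f : X × X → X × X) (hf : Monotone f)
    (φ : X → X) (hφ : ∀ b : X, IsLeast {a : X | (f (a, b)).1 = a} (φ b))
    (bstar : X) (hb : IsLeast {b : X | (f (φ b, b)).2 = b} bstar) :
    IsLeast {p : X × X | f p = p} (φ bstar, bstar) := by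
  have hφmono : Monotone φ := by
    intro b b' hbb'
    refine lfp_le_prefixed hsup (fun a => (f (a, b)).1)
      (fun a a' haa' => (hf (Prod.mk_le_mk.2 ⟨haa', le_rfl⟩)).1)
      (φ b) (hφ b) (φ b') ?_
    calc (f (φ b', b)).1 ≤ (f (φ b', b')).1 :=
          (hf (Prod.mk_le_mk.2 ⟨le_rfl, hbb'⟩)).1
      _ = φ b' := (hφ b').1
  constructor
  · exact Prod.ext (hφ bstar).1 hb.1
  · rintro ⟨p1, p2⟩ hp
    simp only [Set.mem_setOf_eq, Prod.ext_iff] at hp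
    have h1 : φ p2 ≤ p1 :=
      lfp_le_prefixed hsup (fun a => (f (a, p2)).1)
        (fun a a' haa' => (hf (Prod.mk_le_mk.2 ⟨haa', le_rfl⟩)).1)
        (φ p2) (hφ p2) p1 (le_of_eq hp.1)
    have h2 : bstar ≤ p2 := by
      refine lfp_le_prefixed hsup (fun b => (f (φ b, b)).2)
        (fun b b' hbb' => (hf (Prod.mk_le_mk.2 ⟨hφmono hbb', hbb'⟩)).2)
        bstar hb p2 ?_
      calc (f (φ p2, p2)).2 ≤ (f (p1, p2)).2 :=
            (hf (Prod.mk_le_mk.2 ⟨h1, le_rfl⟩)).2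
        _ = p2 := hp.2
    exact Prod.mk_le_mk.2 ⟨le_trans (hφmono h2) h1, h2⟩

/-- Composition-order invariance for monotone/continuous systems: resolving
the two feedback connections of a monotone `f : X × X → X × X` by least fixed
points, in either order, yields the least fixed point of `f` — and hence the
same pair. Here `φ b` is the least fixed point of `a ↦ (f (a, b)).1`,
`bstar` the least fixed point of `b ↦ (f (φ b, b)).2`, and symmetrically
`ψ a` is the least fixed point of `b ↦ (f (a, b)).2` and `astar` the least
fixed point of `a ↦ (f (a, ψ a)).1`. -/
theorem stmt_10 {X : Type*} [PartialOrder X]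
    (hsup : ∀ C : Set X, IsChain (· ≤ ·) C → ∃ u, IsLUB C u)
    (hinf : ∀ C : Set X, C.Nonempty → IsChain (· ≤ ·) C → ∃ g, IsGLB C g)
    (f : X × X → X × X) (hf : Monotone f)
    (φ : X → X) (hφ : ∀ b : X, IsLeast {a : X | (f (a, b)).1 = a} (φ b))
    (bstar : X) (hb : IsLeast {b : X | (f (φ b, b)).2 = b} bstar)
    (ψ : X → X) (hψ : ∀ a : X, IsLeast {b : X | (f (a, b)).2 = b} (ψ a))
    (astar : X) (ha : IsLeast {a : X | (f (a, ψ a)).1 = a} astar) :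
    IsLeast {p : X × X | f p = p} (φ bstar, bstar) ∧
      (φ bstar, bstar) = (astar, ψ astar) := by
  have hleft := main_least hsup f hf φ hφ bstar hb
  refine ⟨hleft, ?_⟩
  set g : X × X → X × X := fun p => (f p.swap).swap with hg
  have hgmono : Monotone g := fun p q hpq =>
    Prod.swap_le_swap.2 (hf (Prod.swap_le_swap.2 hpq))
  have hright := main_least hsup g hgmono ψ hψ astar ha
  have hright' : IsLeast {p : X × X | f p = p} (astar, ψ astar) := by
    constructor
    · have := hright.1
      simp only [Set.mem_setOf_eq, hg, Prod.ext_iff] at this ⊢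
      exact ⟨this.2, this.1⟩
    · rintro ⟨p1, p2⟩ hp
      have hp' : (p2, p1) ∈ {p : X × X | g p = p} := by
        simp only [Set.mem_setOf_eq, hg, Prod.ext_iff] at hp ⊢
        exact ⟨hp.2, hp.1⟩
      have := hright.2 hp'
      exact Prod.mk_le_mk.2 ⟨(Prod.mk_le_mk.1 this).2, (Prod.mk_le_mk.1 this).1⟩
  exact hleft.unique hright'
end

section
/- Let (P, ≤) be a partially ordered set and let 𝒳 be the collection of subsets of P that are well-ordered by <. Let f : 𝒳 → 𝒳 satisfy: for all X, X' ∈ 𝒳 and every y ∈ f X △ f X', there exists x ∈ X △ X' with x < y. Then f has exactly one fixed point: there exists a unique X ∈ 𝒳 with f X = X. -/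
/-- The collection of subsets of a poset `P` that are well-ordered by `<`. -/
def WOSubset (P : Type*) [PartialOrder P] : Type _ :=
  {X : Set P // IsChain (· ≤ ·) X ∧ X.WellFoundedOn (· < ·)}

namespace Stmt12Aux

variable {P : Type*} [PartialOrder P]

lemma wfo_min {s t : Set P} (h : s.WellFoundedOn (· < ·)) (hts : t ⊆ s) (hne : t.Nonempty) :
    ∃ m ∈ t, ∀ x ∈ t, ¬ x < m := by
  rw [Set.wellFoundedOn_iff] at h
  obtain ⟨m, hm, hmin⟩ := h.has_min t hne
  exact ⟨m, hm, fun x hx hlt => hmin x hx ⟨hlt, hts hx, hts hm⟩⟩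

variable (f : WOSubset P → WOSubset P)

/-- A partial fixed point: a well-ordered set `X` together with a lower set `D`
containing it, such that `f X` agrees with `X` on `D`. -/
structure Good where
  X : Set P
  D : Set P
  chain : IsChain (· ≤ ·) X
  wf : X.WellFoundedOn (· < ·)
  lower : IsLowerSet D
  subD : X ⊆ D
  fix : (f ⟨X, chain, wf⟩).1 ∩ D = X

/-- Extension order on partial fixed points. -/
def GoodLE (a b : Good f) : Prop := a.D ⊆ b.D ∧ a.X = b.X ∩ a.D

end Stmt12Aux

open Stmt12Aux in
/-- Unique fixed point theorem for causal functions: if for all `X, X'` every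
element of the symmetric difference of `f X` and `f X'` is preceded by an
element of the symmetric difference of `X` and `X'`, then `f` has exactly one
fixed point. -/
theorem stmt_12 {P : Type*} [PartialOrder P]
    (f : WOSubset P → WOSubset P)
    (hf : ∀ X X' : WOSubset P, ∀ y ∈ symmDiff (f X).1 (f X').1,
      ∃ x ∈ symmDiff X.1 X'.1, x < y) :
    ∃! X : WOSubset P, f X = X := by
  -- transitivity of the extension order
  have trans : ∀ {a b c : Good f}, GoodLE f a b → GoodLE f b c → GoodLE f a c := by
    rintro a b c ⟨hD, hX⟩ ⟨hD', hX'⟩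
    refine ⟨hD.trans hD', ?_⟩
    rw [hX, hX']
    ext x
    exact ⟨fun ⟨⟨h1, h2⟩, h3⟩ => ⟨h1, h3⟩, fun ⟨h1, h3⟩ => ⟨⟨h1, hD h3⟩, h3⟩⟩
  -- every chain of partial fixed points has an upper bound
  have hub : ∀ c, IsChain (GoodLE f) c → ∃ ub, ∀ a ∈ c, GoodLE f a ub := by
    intro c hc
    set Xb : Set P := ⋃ a ∈ c, Good.X a with hXb
    set Db : Set P := ⋃ a ∈ c, Good.D a with hDb
    have hsub : ∀ a ∈ c, a.X ⊆ Xb := fun a ha => Set.subset_biUnion_of_mem ha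
    have hsubD : ∀ a ∈ c, a.D ⊆ Db := fun a ha => Set.subset_biUnion_of_mem ha
    -- key compatibility fact
    have key : ∀ a ∈ c, Xb ∩ a.D = a.X := by
      intro a ha
      ext t
      constructor
      · rintro ⟨htX, htD⟩
        obtain ⟨b, hb, htb⟩ : ∃ b ∈ c, t ∈ b.X := by
          simpa [hXb] using htX
        rcases eq_or_ne a b with rfl | hne
        · exact htb
        · rcases hc ha hb hne with ⟨_, hX⟩ | ⟨_, hX⟩
          · rw [hX]; exact ⟨htb, htD⟩
          · exact (hX ▸ htb).1
      · exact fun ht => ⟨hsub a ha ht, a.subD ht⟩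
    have chainXb : IsChain (· ≤ ·) Xb := by
      intro x hx y hy hxy
      obtain ⟨a, ha, hxa⟩ : ∃ a ∈ c, x ∈ a.X := by simpa [hXb] using hx
      obtain ⟨b, hb, hyb⟩ : ∃ b ∈ c, y ∈ b.X := by simpa [hXb] using hy
      rcases eq_or_ne a b with rfl | hne
      · exact a.chain hxa hyb hxy
      · rcases hc ha hb hne with ⟨_, hX⟩ | ⟨_, hX⟩
        · exact b.chain (hX ▸ hxa).1 hyb hxy
        · exact a.chain hxa (hX ▸ hyb).1 hxy
    have wfXb : Xb.WellFoundedOn (· < ·) := by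
      rw [Set.wellFoundedOn_iff, WellFounded.wellFounded_iff_has_min]
      intro S hS
      by_cases hne : (S ∩ Xb).Nonempty
      · obtain ⟨s, hsS, hsX⟩ := hne
        obtain ⟨a, ha, hsa⟩ : ∃ a ∈ c, s ∈ a.X := by simpa [hXb] using hsX
        set T : Set P := {x | x ∈ S ∧ x ∈ Xb ∧ x ≤ s} with hT
        have hTa : T ⊆ a.X := by
          rintro x ⟨hxS, hxX, hxs⟩
          have : x ∈ a.D := a.lower hxs (a.subD hsa)
          rw [← key a ha]; exact ⟨hxX, this⟩
        obtain ⟨m, hmT, hmin⟩ := wfo_min a.wf hTa ⟨s, hsS, hsX, le_refl s⟩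
        refine ⟨m, hmT.1, ?_⟩
        rintro x hxS ⟨hlt, hxX, _⟩
        exact hmin x ⟨hxS, hxX, hlt.le.trans hmT.2.2⟩ hlt
      · obtain ⟨m, hm⟩ := hS
        exact ⟨m, hm, fun x hx ⟨_, _, hmX⟩ => hne ⟨m, hm, hmX⟩⟩
    set Xbb : WOSubset P := ⟨Xb, chainXb, wfXb⟩ with hXbb
    -- f Xb agrees with f a.X on a.D
    have agree : ∀ a ∈ c, ∀ y ∈ a.D,
        (y ∈ (f Xbb).1 ↔ y ∈ (f ⟨a.X, a.chain, a.wf⟩).1) := by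
      intro a ha y hyD
      by_contra hne
      have hy : y ∈ symmDiff (f Xbb).1 (f ⟨a.X, a.chain, a.wf⟩).1 := by
        rw [Set.mem_symmDiff]; tauto
      obtain ⟨x, hx, hxy⟩ := hf _ _ y hy
      have hxD : x ∈ a.D := a.lower hxy.le hyD
      rw [Set.mem_symmDiff] at hx
      rcases hx with ⟨hx1, hx2⟩ | ⟨hx1, hx2⟩
      · refine hx2 ?_
        show x ∈ a.X
        rw [← key a ha]; exact ⟨hx1, hxD⟩
      · exact hx2 (hsub a ha hx1)
    have fixb : (f Xbb).1 ∩ Db = Xb := by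
      ext y
      constructor
      · rintro ⟨hyf, hyD⟩
        obtain ⟨a, ha, hya⟩ : ∃ a ∈ c, y ∈ a.D := by simpa [hDb] using hyD
        have : y ∈ a.X := by
          rw [← a.fix]; exact ⟨(agree a ha y hya).1 hyf, hya⟩
        exact hsub a ha this
      · intro hy
        obtain ⟨a, ha, hya⟩ : ∃ a ∈ c, y ∈ a.X := by simpa [hXb] using hy
        have hyfix : y ∈ (f ⟨a.X, a.chain, a.wf⟩).1 ∩ a.D := by rw [a.fix]; exact hya
        exact ⟨(agree a ha y hyfix.2).2 hyfix.1, hsubD a ha hyfix.2⟩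
    have lowerDb : IsLowerSet Db := by
      rintro x y hyx hx
      obtain ⟨a, ha, hxa⟩ : ∃ a ∈ c, x ∈ a.D := by simpa [hDb] using hx
      exact hsubD a ha (a.lower hyx hxa)
    refine ⟨⟨Xb, Db, chainXb, wfXb, lowerDb,
      fun x hx => by
        obtain ⟨a, ha, hxa⟩ : ∃ a ∈ c, x ∈ a.X := by simpa [hXb] using hx
        exact hsubD a ha (a.subD hxa), fixb⟩, ?_⟩
    intro a ha
    exact ⟨hsubD a ha, (key a ha).symm⟩
  obtain ⟨m, hmax⟩ := exists_maximal_of_chains_bounded hub (fun h1 h2 => trans h1 h2)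
  set Xm : WOSubset P := ⟨m.X, m.chain, m.wf⟩ with hXm
  set Y : Set P := (f Xm).1 with hY
  have hXsubY : m.X ⊆ Y := fun x hx => by
    have : x ∈ (f Xm).1 ∩ m.D := by rw [m.fix]; exact hx
    exact this.1
  have hsdD : ∀ x ∈ symmDiff Y m.X, x ∉ m.D := by
    intro x hx hxD
    rw [Set.mem_symmDiff] at hx
    rcases hx with ⟨hx1, hx2⟩ | ⟨hx1, hx2⟩
    · refine hx2 ?_
      rw [← m.fix]; exact ⟨hx1, hxD⟩
    · exact hx2 (hXsubY hx1)
  -- the maximal partial fixed point is a genuine fixed point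
  have hfix : (f Xm) = Xm := by
    by_contra hne
    have hsd : (symmDiff Y m.X).Nonempty := by
      rw [Set.nonempty_iff_ne_empty]
      intro h
      exact hne (Subtype.ext (by
        have := symmDiff_eq_bot.1 h
        exact this))
    have hwfU : (Y ∪ m.X).WellFoundedOn (· < ·) := (f Xm).2.2.union m.wf
    have hsdsub : symmDiff Y m.X ⊆ Y ∪ m.X := by
      intro x hx; rw [Set.mem_symmDiff] at hx; tauto
    obtain ⟨μ, hμ, hμmin⟩ := wfo_min hwfU hsdsub hsd
    set G : Set P := {p | ∀ x ∈ symmDiff Y m.X, ¬ x < p} with hG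
    have lowerG : IsLowerSet G := by
      rintro p q hqp hp x hx hlt
      exact hp x hx (lt_of_lt_of_le hlt hqp)
    have hDG : m.D ⊆ G := fun p hp x hx hlt => hsdD x hx (m.lower hlt.le hp)
    have hμG : μ ∈ G := hμmin
    have hμD : μ ∉ m.D := hsdD μ hμ
    -- the new partial fixed point
    have chainY' : IsChain (· ≤ ·) (Y ∩ G) := (f Xm).2.1.mono Set.inter_subset_left
    have wfY' : (Y ∩ G).WellFoundedOn (· < ·) := (f Xm).2.2.subset Set.inter_subset_left
    set X'b : WOSubset P := ⟨Y ∩ G, chainY', wfY'⟩ with hX'b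
    -- step 1 : f (f Xm) agrees with Y on G
    have step1 : ∀ y ∈ G, (y ∈ (f (f Xm)).1 ↔ y ∈ Y) := by
      intro y hyG
      by_contra hne'
      have hy : y ∈ symmDiff (f (f Xm)).1 (f Xm).1 := by
        rw [Set.mem_symmDiff]; tauto
      obtain ⟨x, hx, hxy⟩ := hf _ _ y hy
      exact hyG x hx hxy
    -- step 2 : f X'b agrees with f (f Xm) on G
    have step2 : ∀ y ∈ G, (y ∈ (f X'b).1 ↔ y ∈ (f (f Xm)).1) := by
      intro y hyG
      by_contra hne'
      have hy : y ∈ symmDiff (f X'b).1 (f (f Xm)).1 := by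
        rw [Set.mem_symmDiff]; tauto
      obtain ⟨x, hx, hxy⟩ := hf _ _ y hy
      rw [Set.mem_symmDiff] at hx
      have hxG : x ∉ G := by
        rcases hx with ⟨hx1, hx2⟩ | ⟨hx1, hx2⟩
        · exact fun _ => hx2 (show x ∈ Y from (show x ∈ Y ∩ G from hx1).1)
        · exact fun h => hx2 (show x ∈ Y ∩ G from ⟨hx1, h⟩)
      exact hxG (lowerG hxy.le hyG)
    have fix' : (f X'b).1 ∩ G = Y ∩ G := by
      ext y
      constructor
      · rintro ⟨h1, h2⟩; exact ⟨(step1 y h2).1 ((step2 y h2).1 h1), h2⟩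
      · rintro ⟨h1, h2⟩; exact ⟨(step2 y h2).2 ((step1 y h2).2 h1), h2⟩
    set a' : Good f := ⟨Y ∩ G, G, chainY', wfY', lowerG, Set.inter_subset_right, fix'⟩
    have hle : GoodLE f m a' := by
      refine ⟨hDG, ?_⟩
      have : Y ∩ G ∩ m.D = Y ∩ m.D := by
        ext x
        exact ⟨fun ⟨⟨h1, _⟩, h3⟩ => ⟨h1, h3⟩, fun ⟨h1, h3⟩ => ⟨⟨h1, hDG h3⟩, h3⟩⟩
      rw [show a'.X = Y ∩ G from rfl, this, m.fix]
    obtain ⟨hGD, _⟩ := hmax a' hle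
    exact hμD (hGD hμG)
  -- uniqueness
  refine ⟨Xm, hfix, ?_⟩
  intro Z hZ
  by_contra hne
  have hsd : (symmDiff Z.1 Xm.1).Nonempty := by
    rw [Set.nonempty_iff_ne_empty]
    intro h
    exact hne (Subtype.ext (symmDiff_eq_bot.1 h))
  have hwfU : (Z.1 ∪ Xm.1).WellFoundedOn (· < ·) := Z.2.2.union Xm.2.2
  have hsdsub : symmDiff Z.1 Xm.1 ⊆ Z.1 ∪ Xm.1 := by
    intro x hx; rw [Set.mem_symmDiff] at hx; tauto
  obtain ⟨μ, hμ, hμmin⟩ := wfo_min hwfU hsdsub hsd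
  have : μ ∈ symmDiff (f Z).1 (f Xm).1 := by rw [hZ, hfix]; exact hμ
  obtain ⟨x, hx, hxy⟩ := hf _ _ μ this
  exact hμmin x hx hxy
end

section
/- Let (P, ≤) be a partially ordered set, 𝒳 the collection of well-ordered subsets of P, ι and κ finite types, and s : (ι → 𝒳) → (κ → 𝒳) a causal system. Then for every i : ι, o : κ, and every 𝐗 : ι → 𝒳, there exists a unique Y ∈ 𝒳 such that s (Function.update 𝐗 i Y) o = Y. -/
namespace CausalAux

variable {P : Type*} [PartialOrder P]

/-- A strictly contracting (causal) map on well-ordered subsets. -/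
def Contr (F : WOSubset P → WOSubset P) : Prop :=
  ∀ A B : WOSubset P, ∀ y ∈ symmDiff (F A).1 (F B).1, ∃ x ∈ symmDiff A.1 B.1, x < y

variable {F : WOSubset P → WOSubset P}

lemma wf_min {s t : Set P} (hs : s.WellFoundedOn (· < ·)) (hts : t ⊆ s)
    (hne : t.Nonempty) : ∃ m ∈ t, ∀ x ∈ t, ¬ x < m := by
  have h := Set.wellFoundedOn_iff.mp (hs.subset hts)
  obtain ⟨m, hm, hmin⟩ := h.has_min t hne
  exact ⟨m, hm, fun x hx hlt => hmin x hx ⟨hlt, hx, hm⟩⟩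

lemma locality (hF : Contr F) {A B : WOSubset P} {y : P}
    (h : ∀ x, x < y → (x ∈ A.1 ↔ x ∈ B.1)) : y ∈ (F A).1 ↔ y ∈ (F B).1 := by
  by_contra hc
  have hy : y ∈ symmDiff (F A).1 (F B).1 := by
    rw [Set.mem_symmDiff]; tauto
  obtain ⟨x, hx, hxy⟩ := hF A B y hy
  rw [Set.mem_symmDiff] at hx
  have := h x hxy
  tauto

/-- `Z` is an approximant: it is contained in `F Z` and is a `<`-downward-closed
subset of `F Z`. -/
def Approx (F : WOSubset P → WOSubset P) (Z : WOSubset P) : Prop :=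
  Z.1 ⊆ (F Z).1 ∧ ∀ y ∈ (F Z).1, ∀ z ∈ Z.1, y < z → y ∈ Z.1

lemma half (hF : Contr F) {Z Z' : WOSubset P} (hZ : Approx F Z) (hZ' : Approx F Z')
    {y₀ : P} (h1 : y₀ ∈ Z.1) (h2 : y₀ ∉ Z'.1)
    (hmin : ∀ x ∈ symmDiff Z.1 Z'.1, ¬ x < y₀) :
    Z'.1 = Z.1 ∩ {x | x < y₀} := by
  have agree : ∀ x, x < y₀ → (x ∈ Z.1 ↔ x ∈ Z'.1) := by
    intro x hx
    by_contra hc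
    exact hmin x (by rw [Set.mem_symmDiff]; tauto) hx
  have hyF : y₀ ∈ (F Z').1 := (locality hF agree).mp (hZ.1 h1)
  have hlt : ∀ z' ∈ Z'.1, z' < y₀ := by
    intro z' hz'
    have hz'F : z' ∈ (F Z').1 := hZ'.1 hz'
    have hne : z' ≠ y₀ := fun h => h2 (h ▸ hz')
    rcases (F Z').2.1 hz'F hyF hne with h | h
    · exact lt_of_le_of_ne h hne
    · exact absurd (hZ'.2 y₀ hyF z' hz' (lt_of_le_of_ne h (Ne.symm hne))) h2
  ext x
  constructor
  · intro hx
    have hxlt := hlt x hx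
    exact ⟨(agree x hxlt).mpr hx, hxlt⟩
  · rintro ⟨hxZ, hxlt⟩
    exact (agree x hxlt).mp hxZ

lemma key (hF : Contr F) {Z Z' : WOSubset P} (hZ : Approx F Z) (hZ' : Approx F Z') :
    (Z.1 ⊆ Z'.1 ∨ Z'.1 ⊆ Z.1) ∧ ∀ x ∈ Z'.1, ∀ y ∈ Z.1, x < y → x ∈ Z.1 := by
  by_cases hD : symmDiff Z.1 Z'.1 = ∅
  · have heq : Z.1 = Z'.1 := by
      rwa [← Set.bot_eq_empty, symmDiff_eq_bot] at hD
    exact ⟨Or.inl heq.le, fun x hx y _ _ => heq ▸ hx⟩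
  · have hne : (symmDiff Z.1 Z'.1).Nonempty := Set.nonempty_iff_ne_empty.mpr hD
    have hsub : symmDiff Z.1 Z'.1 ⊆ Z.1 ∪ Z'.1 := symmDiff_le_sup
    obtain ⟨y₀, hy₀, hy₀min⟩ := wf_min (Z.2.2.union Z'.2.2) hsub hne
    rw [Set.mem_symmDiff] at hy₀
    rcases hy₀ with ⟨h1, h2⟩ | ⟨h1, h2⟩
    · -- y₀ ∈ Z \ Z' : Z' = Z ∩ {x | x < y₀}
      have hh := half hF hZ hZ' h1 h2 hy₀min
      refine ⟨Or.inr (by rw [hh]; exact Set.inter_subset_left), ?_⟩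
      intro x hx y _ _
      rw [hh] at hx
      exact hx.1
    · -- y₀ ∈ Z' \ Z : Z = Z' ∩ {x | x < y₀}
      have hmin' : ∀ x ∈ symmDiff Z'.1 Z.1, ¬ x < y₀ := by
        intro x hx; exact hy₀min x (by rwa [symmDiff_comm] at hx)
      have hh := half hF hZ' hZ h1 h2 hmin'
      refine ⟨Or.inl (by rw [hh]; exact Set.inter_subset_left), ?_⟩
      intro x hx y hy hxy
      rw [hh]
      rw [hh] at hy
      exact ⟨hx, lt_trans hxy hy.2⟩

/-- The union of all approximants. -/
def UA (F : WOSubset P → WOSubset P) : Set P :=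
  {p | ∃ Z : WOSubset P, Approx F Z ∧ p ∈ Z.1}

lemma cross (hF : Contr F) {Z : WOSubset P} (hZ : Approx F Z)
    {x y : P} (hx : x ∈ UA F) (hy : y ∈ Z.1) (hxy : x < y) : x ∈ Z.1 := by
  obtain ⟨Z', hZ', hxZ'⟩ := hx
  exact (key hF hZ hZ').2 x hxZ' y hy hxy

lemma chainUA (hF : Contr F) : IsChain (· ≤ ·) (UA F) := by
  rintro p ⟨Z, hZ, hp⟩ q ⟨Z', hZ', hq⟩ hne
  rcases (key hF hZ hZ').1 with h | h
  · exact Z'.2.1 (h hp) hq hne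
  · exact Z.2.1 hp (h hq) hne

lemma wfUA (hF : Contr F) : (UA F).WellFoundedOn (· < ·) := by
  rw [Set.wellFoundedOn_iff, WellFounded.wellFounded_iff_has_min]
  intro T hT
  obtain ⟨t₀, ht₀⟩ := hT
  by_cases ht₀U : t₀ ∈ UA F
  · obtain ⟨Z, hZ, ht₀Z⟩ := ht₀U
    have hne : (T ∩ Z.1).Nonempty := ⟨t₀, ht₀, ht₀Z⟩
    obtain ⟨m, hm, hmin⟩ := wf_min Z.2.2 Set.inter_subset_right hne
    refine ⟨m, hm.1, ?_⟩
    rintro x hx ⟨hlt, hxU, _⟩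
    exact hmin x ⟨hx, cross hF hZ hxU hm.2 hlt⟩ hlt
  · exact ⟨t₀, ht₀, fun x _ h => ht₀U h.2.2⟩

/-- The union of all approximants, as a well-ordered subset. -/
def UU (hF : Contr F) : WOSubset P := ⟨UA F, chainUA hF, wfUA hF⟩

lemma agreeUA (hF : Contr F) {Z : WOSubset P} (hZ : Approx F Z)
    {z : P} (hz : z ∈ Z.1) : ∀ x, x < z → (x ∈ UA F ↔ x ∈ Z.1) := by
  intro x hx
  exact ⟨fun h => cross hF hZ h hz hx, fun h => ⟨Z, hZ, h⟩⟩

lemma approxUU (hF : Contr F) : Approx F (UU hF) := by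
  constructor
  · rintro y ⟨Z, hZ, hy⟩
    have hloc := locality hF (A := Z) (B := UU hF)
      (fun x hx => (agreeUA hF hZ hy x hx).symm)
    exact hloc.mp (hZ.1 hy)
  · rintro y hyF z ⟨Z, hZ, hz⟩ hyz
    have hloc := locality hF (A := UU hF) (B := Z)
      (fun x hx => agreeUA hF hZ hz x (lt_trans hx hyz))
    have hyFZ : y ∈ (F Z).1 := hloc.mp hyF
    exact ⟨Z, hZ, hZ.2 y hyFZ z hz hyz⟩

lemma fixedUU (hF : Contr F) : F (UU hF) = UU hF := by
  have hsub : (UU hF).1 ⊆ (F (UU hF)).1 := (approxUU hF).1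
  have hsup : (F (UU hF)).1 ⊆ (UU hF).1 := by
    by_contra hc
    have hne : ((F (UU hF)).1 \ UA F).Nonempty := by
      rw [Set.diff_nonempty]
      exact hc
    obtain ⟨m, hm, hmin⟩ := wf_min (F (UU hF)).2.2 Set.diff_subset hne
    have hnot : ∀ z ∈ UA F, ¬ m < z :=
      fun z hz hmz => hm.2 ((approxUU hF).2 m hm.1 z hz hmz)
    have hsub' : insert m (UA F) ⊆ (F (UU hF)).1 := by
      intro x hx
      rcases hx with rfl | hx
      · exact hm.1
      · exact hsub hx
    have hUU' : IsChain (· ≤ ·) (insert m (UA F)) ∧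
        (insert m (UA F)).WellFoundedOn (· < ·) :=
      ⟨(F (UU hF)).2.1.mono hsub', (F (UU hF)).2.2.subset hsub'⟩
    set UU' : WOSubset P := ⟨insert m (UA F), hUU'⟩ with hUU'def
    have hdiff : ∀ w ∈ symmDiff (F UU').1 (F (UU hF)).1, m < w := by
      intro w hw
      obtain ⟨x, hx, hxw⟩ := hF UU' (UU hF) w hw
      rw [Set.mem_symmDiff] at hx
      have hxm : x = m := by
        rcases hx with ⟨hx1, hx2⟩ | ⟨hx1, hx2⟩
        · rcases hx1 with rfl | hx1
          · rfl
          · exact absurd hx1 hx2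
        · exact absurd (Set.mem_insert_of_mem m hx1) hx2
      exact hxm ▸ hxw
    have hApprox' : Approx F UU' := by
      constructor
      · intro x hx
        by_contra hxF'
        have hxF : x ∈ (F (UU hF)).1 := hsub' hx
        have hmx : m < x := hdiff x (by rw [Set.mem_symmDiff]; tauto)
        rcases hx with rfl | hx
        · exact absurd hmx (lt_irrefl _)
        · exact hnot x hx hmx
      · intro w hwF' z hz hwz
        have hwF : w ∈ (F (UU hF)).1 := by
          by_contra hwF
          have hmw : m < w := hdiff w (by rw [Set.mem_symmDiff]; tauto)
          rcases hz with rfl | hz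
          · exact absurd (lt_trans hmw hwz) (lt_irrefl _)
          · exact hnot z hz (lt_trans hmw hwz)
        rcases hz with rfl | hz
        · -- z = m : w < m, so w ∈ UA F by minimality of m
          by_contra hwU'
          have hwU : w ∉ UA F := fun h => hwU' (Set.mem_insert_of_mem _ h)
          exact hmin w ⟨hwF, hwU⟩ hwz
        · exact Set.mem_insert_of_mem m ((approxUU hF).2 w hwF z hz hwz)
    exact hm.2 ⟨UU', hApprox', Set.mem_insert m (UA F)⟩
  exact Subtype.ext (Set.Subset.antisymm hsup hsub)

/-- A strictly contracting map on well-ordered subsets has a unique fixed point. -/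
theorem existsUnique_fixedPoint (hF : Contr F) : ∃! Y : WOSubset P, F Y = Y := by
  refine ⟨UU hF, fixedUU hF, ?_⟩
  intro Y hY
  -- uniqueness: any two fixed points are equal
  have huniq : ∀ A B : WOSubset P, F A = A → F B = B → A = B := by
    intro A B hA hB
    by_contra hne
    have hD : (symmDiff A.1 B.1).Nonempty := by
      rw [Set.nonempty_iff_ne_empty]
      intro h
      rw [← Set.bot_eq_empty, symmDiff_eq_bot] at h
      exact hne (Subtype.ext h)
    obtain ⟨y, hy, hymin⟩ := wf_min (A.2.2.union B.2.2)
      (symmDiff_le_sup : symmDiff A.1 B.1 ⊆ A.1 ∪ B.1) hD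
    have hy' : y ∈ symmDiff (F A).1 (F B).1 := by rwa [hA, hB]
    obtain ⟨x, hx, hxy⟩ := hF A B y hy'
    exact hymin x hx hxy
  exact huniq Y (UU hF) hY (fixedUU hF)

end CausalAux

/-- Connecting an input interface `i` to an output interface `o` of a causal
system yields a unique fixed point, for every input tuple at the remaining
interfaces. -/
theorem stmt_13 {P : Type*} [PartialOrder P]
    {ι κ : Type*} [Fintype ι] [Fintype κ] [DecidableEq ι]
    (s : (ι → WOSubset P) → (κ → WOSubset P))
    (hs : ∀ Xs Xs' : ι → WOSubset P, ∀ o : κ,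
      ∀ y ∈ symmDiff (s Xs o).1 (s Xs' o).1,
        ∃ i : ι, ∃ x ∈ symmDiff (Xs i).1 (Xs' i).1, x < y) :
    ∀ (i : ι) (o : κ) (Xs : ι → WOSubset P),
      ∃! Y : WOSubset P, s (Function.update Xs i Y) o = Y := by
  intro i o Xs
  apply CausalAux.existsUnique_fixedPoint
    (F := fun Y => s (Function.update Xs i Y) o)
  intro A B y hy
  obtain ⟨j, x, hx, hxy⟩ := hs (Function.update Xs i A) (Function.update Xs i B) o y hy
  by_cases hji : j = i
  · subst hji
    rw [Function.update_self, Function.update_self] at hx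
    exact ⟨x, hx, hxy⟩
  · rw [Function.update_of_ne hji, Function.update_of_ne hji, symmDiff_self] at hx
    exact absurd hx (Set.notMem_empty x)
end

section
/- Let (P, ≤) be a partially ordered set, 𝒳 the collection of well-ordered subsets of P, ι and κ finite types, and s : (ι → 𝒳) → (κ → 𝒳) a causal system. Fix i : ι and o : κ, and let Φ : (ι → 𝒳) → 𝒳 satisfy s (Function.update 𝐗 i (Φ 𝐗)) o = Φ 𝐗 for all 𝐗 : ι → 𝒳 (i.e., Φ 𝐗 is the fixed point arising when connecting input interface i to output interface o). Then for all 𝐗, 𝐗' : ι → 𝒳 and every y ∈ Φ 𝐗 △ Φ 𝐗', there exist i' : ι with i' ≠ i and x ∈ 𝐗 i' △ 𝐗' i' with x < y. -/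
/-- Changing the input of a causal system can only change the fixed point
arising from connecting interface `i` to interface `o` after the change:
every element of the symmetric difference of `Φ Xs` and `Φ Xs'` is preceded
by an element of the symmetric difference of the inputs at some interface
`i' ≠ i`. -/
theorem stmt_14 {P : Type*} [PartialOrder P]
    {ι κ : Type*} [Fintype ι] [Fintype κ] [DecidableEq ι]
    (s : (ι → WOSubset P) → (κ → WOSubset P))
    (hs : ∀ Xs Xs' : ι → WOSubset P, ∀ o : κ,
      ∀ y ∈ symmDiff (s Xs o).1 (s Xs' o).1,
        ∃ i : ι, ∃ x ∈ symmDiff (Xs i).1 (Xs' i).1, x < y)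
    (i : ι) (o : κ) (Φ : (ι → WOSubset P) → WOSubset P)
    (hΦ : ∀ Xs : ι → WOSubset P, s (Function.update Xs i (Φ Xs)) o = Φ Xs) :
    ∀ Xs Xs' : ι → WOSubset P, ∀ y ∈ symmDiff (Φ Xs).1 (Φ Xs').1,
      ∃ i' : ι, i' ≠ i ∧ ∃ x ∈ symmDiff (Xs i').1 (Xs' i').1, x < y := by
  intro Xs Xs' y hy
  have hwf : ((Φ Xs).1 ∪ (Φ Xs').1).WellFoundedOn (· < ·) :=
    (Φ Xs).2.2.union (Φ Xs').2.2
  have hsub : symmDiff (Φ Xs).1 (Φ Xs').1 ⊆ (Φ Xs).1 ∪ (Φ Xs').1 :=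
    symmDiff_le_sup
  have hwf' : (symmDiff (Φ Xs).1 (Φ Xs').1).WellFoundedOn (· < ·) :=
    hwf.subset hsub
  refine hwf'.induction (P := fun y => ∃ i', i' ≠ i ∧ ∃ x ∈ symmDiff (Xs i').1 (Xs' i').1, x < y) hy ?_
  intro y hy ih
  obtain ⟨i₀, x, hx, hxy⟩ := hs (Function.update Xs i (Φ Xs))
    (Function.update Xs' i (Φ Xs')) o y (by rwa [hΦ, hΦ])
  by_cases hii : i₀ = i
  · subst hii
    simp only [Function.update_self] at hx
    obtain ⟨i', hi', z, hz, hzx⟩ := ih x hx hxy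
    exact ⟨i', hi', z, hz, hzx.trans hxy⟩
  · refine ⟨i₀, hii, x, ?_, hxy⟩
    rwa [Function.update_of_ne hii, Function.update_of_ne hii] at hx
end

section
/- Let (P, ≤) be a partially ordered set, 𝒳 the collection of well-ordered subsets of P, ι and κ finite types, and s : (ι → 𝒳) → (κ → 𝒳) a causal system. Fix i : ι and o : κ, and let Φ : (ι → 𝒳) → 𝒳 satisfy s (Function.update 𝐗 i (Φ 𝐗)) o = Φ 𝐗 for all 𝐗. Then the interface-connected system is again causal: for all 𝐗, 𝐗' : ι → 𝒳, every o' : κ with o' ≠ o, and every y ∈ s (Function.update 𝐗 i (Φ 𝐗)) o' △ s (Function.update 𝐗' i (Φ 𝐗')) o', there exist j : ι with j ≠ i and x ∈ 𝐗 j △ 𝐗' j with x < y. (Hence the class of causal systems is closed under interface connection, and the causal systems form a composition-order invariant functional system algebra.) -/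
/-- The class of causal systems is closed under interface connection: if `Φ`
selects the fixed point arising from connecting input interface `i` to output
interface `o` of the causal system `s`, then the interface-connected system
is again causal on the remaining interfaces. -/
theorem stmt_15 {P : Type*} [PartialOrder P]
    {ι κ : Type*} [Fintype ι] [Fintype κ] [DecidableEq ι]
    (s : (ι → WOSubset P) → (κ → WOSubset P))
    (hs : ∀ Xs Xs' : ι → WOSubset P, ∀ o : κ,
      ∀ y ∈ symmDiff (s Xs o).1 (s Xs' o).1,
        ∃ i : ι, ∃ x ∈ symmDiff (Xs i).1 (Xs' i).1, x < y)
    (i : ι) (o : κ) (Φ : (ι → WOSubset P) → WOSubset P)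
    (hΦ : ∀ Xs : ι → WOSubset P, s (Function.update Xs i (Φ Xs)) o = Φ Xs) :
    ∀ Xs Xs' : ι → WOSubset P, ∀ o' : κ, o' ≠ o →
      ∀ y ∈ symmDiff (s (Function.update Xs i (Φ Xs)) o').1
          (s (Function.update Xs' i (Φ Xs')) o').1,
        ∃ j : ι, j ≠ i ∧ ∃ x ∈ symmDiff (Xs j).1 (Xs' j).1, x < y := by
  intro Xs Xs' o' _ y hy
  -- the union of the two fixed-point sets is well-founded on <
  set T : Set P := (Φ Xs).1 ∪ (Φ Xs').1 with hT
  have hTwf : T.WellFoundedOn (· < ·) := (Φ Xs).2.2.union (Φ Xs').2.2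
  -- key claim by well-founded induction on T
  have key : ∀ x ∈ T, x ∈ symmDiff (Φ Xs).1 (Φ Xs').1 →
      ∃ j : ι, j ≠ i ∧ ∃ z ∈ symmDiff (Xs j).1 (Xs' j).1, z < x := by
    intro x hxT
    refine hTwf.induction (P := fun x => x ∈ symmDiff (Φ Xs).1 (Φ Xs').1 →
        ∃ j : ι, j ≠ i ∧ ∃ z ∈ symmDiff (Xs j).1 (Xs' j).1, z < x) hxT ?_
    intro a haT ih ha
    have ha' : a ∈ symmDiff (s (Function.update Xs i (Φ Xs)) o).1
        (s (Function.update Xs' i (Φ Xs')) o).1 := by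
      rw [hΦ Xs, hΦ Xs']; exact ha
    obtain ⟨i₀, x', hx', hlt⟩ := hs _ _ o a ha'
    by_cases hi : i₀ = i
    · subst hi
      rw [Function.update_self, Function.update_self] at hx'
      have hx'T : x' ∈ T := by
        rcases hx' with ⟨h1, _⟩ | ⟨h1, _⟩
        · exact Or.inl h1
        · exact Or.inr h1
      obtain ⟨j, hj, z, hz, hzx⟩ := ih x' hx'T hlt hx'
      exact ⟨j, hj, z, hz, hzx.trans hlt⟩
    · rw [Function.update_of_ne hi, Function.update_of_ne hi] at hx'
      exact ⟨i₀, hi, x', hx', hlt⟩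
  obtain ⟨i₀, x, hx, hlt⟩ := hs _ _ o' y hy
  by_cases hi : i₀ = i
  · subst hi
    rw [Function.update_self, Function.update_self] at hx
    have hxT : x ∈ T := by
      rcases hx with ⟨h1, _⟩ | ⟨h1, _⟩
      · exact Or.inl h1
      · exact Or.inr h1
    obtain ⟨j, hj, z, hz, hzx⟩ := key x hxT hx
    exact ⟨j, hj, z, hz, hzx.trans hlt⟩
  · rw [Function.update_of_ne hi, Function.update_of_ne hi] at hx
    exact ⟨i₀, hi, x, hx, hlt⟩
end
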